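/- arXiv:1902.03074 — 3 statements merged into one kernel-verified Lean document; each statement's English description precedes it below -/
import Mathlib

section
/- Let Σ be an ed signature, M1 and M2 be Σ-edts, and B ⊆ Conf(M1) × Conf(M2) a bisimulation relation between M1 and M2. Then for every hybrid-free sentence ρ and every (γ1, γ2) ∈ B: M1, γ1 ⊨ ρ if and only if M2, γ2 ⊨ ρ. -/
/-!
Framework: event/data transition systems (edts) over an ed signature Σ = (E, A)
with a data universe `Data`, a type `SP` of state predicates and a type `TP` of
transition predicates (interpreted via `spSat`/`tpSat`).
-/

/-- Configurations: a control state paired with an `A`-data state. -/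
abbrev Conf' (C A Data : Type) : Type := C × (A → Data)

/-- The raw data of a Σ-event/data transition system with control states `C`. -/
structure PreEDTS (E A Data C : Type) : Type where
  conf : Set (Conf' C A Data)
  rel : E → Set (Conf' C A Data × Conf' C A Data)
  c0 : C
  init : Set (Conf' C A Data)

/-- `M` is a genuine Σ-edts: transitions stay inside the configurations, the
initial configurations form a non-empty subset of the configurations, all with
control state `c0`, and every configuration is reachable from an initial one. -/
def PreEDTS.IsEDTS {E A Data C : Type} (M : PreEDTS E A Data C) : Prop :=
  (∀ (e : E) p, p ∈ M.rel e → p.1 ∈ M.conf ∧ p.2 ∈ M.conf) ∧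
  M.init ⊆ M.conf ∧
  (∀ γ ∈ M.init, γ.1 = M.c0) ∧
  M.init.Nonempty ∧
  (∀ γ ∈ M.conf, ∃ γ0 ∈ M.init,
    Relation.ReflTransGen (fun γ γ' => ∃ e : E, (γ, γ') ∈ M.rel e) γ0 γ)

/-- Σ-ed actions: atomic actions `e⧸ψ`, union, sequential composition, iteration. -/
inductive Act (E TP : Type) : Type where
  | atom : E → TP → Act E TP
  | choice : Act E TP → Act E TP → Act E TP
  | seq : Act E TP → Act E TP → Act E TP
  | star : Act E TP → Act E TP

/-- Interpretation of Σ-ed actions over an edts `M`. -/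
def actRel {E A Data C TP : Type} (tpSat : TP → (A → Data) → (A → Data) → Prop)
    (M : PreEDTS E A Data C) :
    Act E TP → Conf' C A Data → Conf' C A Data → Prop
  | Act.atom e ψ => fun γ γ' => (γ, γ') ∈ M.rel e ∧ tpSat ψ γ.2 γ'.2
  | Act.choice l₁ l₂ => fun γ γ' => actRel tpSat M l₁ γ γ' ∨ actRel tpSat M l₂ γ γ'
  | Act.seq l₁ l₂ => fun γ γ' => ∃ γm, actRel tpSat M l₁ γ γm ∧ actRel tpSat M l₂ γm γ'
  | Act.star l => Relation.ReflTransGen (actRel tpSat M l)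

/-- Hybrid-free Σ-ed formulae: `ρ ::= φ | ⟨λ⟩ρ | true | ¬ρ | ρ₁ ∨ ρ₂`. -/
inductive HFrm (E TP SP : Type) : Type where
  | st : SP → HFrm E TP SP
  | dia : Act E TP → HFrm E TP SP → HFrm E TP SP
  | tt : HFrm E TP SP
  | neg : HFrm E TP SP → HFrm E TP SP
  | or : HFrm E TP SP → HFrm E TP SP → HFrm E TP SP

/-- Satisfaction of hybrid-free sentences at a configuration. -/
def hsat {E A Data C SP TP : Type} (spSat : SP → (A → Data) → Prop)
    (tpSat : TP → (A → Data) → (A → Data) → Prop)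
    (M : PreEDTS E A Data C) : Conf' C A Data → HFrm E TP SP → Prop
  | γ, HFrm.st φ => spSat φ γ.2
  | γ, HFrm.dia l ρ => ∃ γ', actRel tpSat M l γ γ' ∧ hsat spSat tpSat M γ' ρ
  | _, HFrm.tt => True
  | γ, HFrm.neg ρ => ¬ hsat spSat tpSat M γ ρ
  | γ, HFrm.or ρ₁ ρ₂ => hsat spSat tpSat M γ ρ₁ ∨ hsat spSat tpSat M γ ρ₂

/-- Bisimulation relations `B ⊆ Conf(M1) × Conf(M2)`: conditions (atom), (zig), (zag). -/
structure IsBisim {E A Data C₁ C₂ SP TP : Type}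
    (spSat : SP → (A → Data) → Prop)
    (tpSat : TP → (A → Data) → (A → Data) → Prop)
    (M₁ : PreEDTS E A Data C₁) (M₂ : PreEDTS E A Data C₂)
    (B : Conf' C₁ A Data → Conf' C₂ A Data → Prop) : Prop where
  dom : ∀ γ₁ γ₂, B γ₁ γ₂ → γ₁ ∈ M₁.conf ∧ γ₂ ∈ M₂.conf
  atom : ∀ γ₁ γ₂, B γ₁ γ₂ → ∀ φ : SP, spSat φ γ₁.2 ↔ spSat φ γ₂.2
  zig : ∀ γ₁ γ₂, B γ₁ γ₂ → ∀ (e : E) (ψ : TP) γ₁',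
    (γ₁, γ₁') ∈ M₁.rel e → tpSat ψ γ₁.2 γ₁'.2 →
    ∃ γ₂', ((γ₂, γ₂') ∈ M₂.rel e ∧ tpSat ψ γ₂.2 γ₂'.2) ∧ B γ₁' γ₂'
  zag : ∀ γ₁ γ₂, B γ₁ γ₂ → ∀ (e : E) (ψ : TP) γ₂',
    (γ₂, γ₂') ∈ M₂.rel e → tpSat ψ γ₂.2 γ₂'.2 →
    ∃ γ₁', ((γ₁, γ₁') ∈ M₁.rel e ∧ tpSat ψ γ₁.2 γ₁'.2) ∧ B γ₁' γ₂'

/-- `M₁` and `M₂` are bisimilar: there is a bisimulation relation additionally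
satisfying the (init) condition. -/
def Bisimilar {E A Data C₁ C₂ SP TP : Type}
    (spSat : SP → (A → Data) → Prop)
    (tpSat : TP → (A → Data) → (A → Data) → Prop)
    (M₁ : PreEDTS E A Data C₁) (M₂ : PreEDTS E A Data C₂) : Prop :=
  ∃ B, IsBisim spSat tpSat M₁ M₂ B ∧
    (∀ γ₁ ∈ M₁.init, ∃ γ₂ ∈ M₂.init, B γ₁ γ₂) ∧
    (∀ γ₂ ∈ M₂.init, ∃ γ₁ ∈ M₁.init, B γ₁ γ₂)

/-- `M ⊨ ρ`: the sentence `ρ` holds at all initial configurations of `M`. -/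
def MsatHF {E A Data C SP TP : Type} (spSat : SP → (A → Data) → Prop)
    (tpSat : TP → (A → Data) → (A → Data) → Prop)
    (M : PreEDTS E A Data C) (ρ : HFrm E TP SP) : Prop :=
  ∀ γ0 ∈ M.init, hsat spSat tpSat M γ0 ρ


lemma act_zig {E A Data C₁ C₂ SP TP : Type}
    (spSat : SP → (A → Data) → Prop)
    (tpSat : TP → (A → Data) → (A → Data) → Prop)
    (M₁ : PreEDTS E A Data C₁) (M₂ : PreEDTS E A Data C₂)
    (B : Conf' C₁ A Data → Conf' C₂ A Data → Prop)
    (hB : IsBisim spSat tpSat M₁ M₂ B) :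
    ∀ (l : Act E TP) γ₁ γ₂ γ₁', B γ₁ γ₂ → actRel tpSat M₁ l γ₁ γ₁' →
      ∃ γ₂', actRel tpSat M₂ l γ₂ γ₂' ∧ B γ₁' γ₂' := by
  intro l
  induction l with
  | atom e ψ =>
    intro γ₁ γ₂ γ₁' hb h
    obtain ⟨γ₂', h₂, hb'⟩ := hB.zig γ₁ γ₂ hb e ψ γ₁' h.1 h.2
    exact ⟨γ₂', h₂, hb'⟩
  | choice l₁ l₂ ih₁ ih₂ =>
    intro γ₁ γ₂ γ₁' hb h
    rcases h with h | h
    · obtain ⟨γ₂', h₂, hb'⟩ := ih₁ γ₁ γ₂ γ₁' hb h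
      exact ⟨γ₂', Or.inl h₂, hb'⟩
    · obtain ⟨γ₂', h₂, hb'⟩ := ih₂ γ₁ γ₂ γ₁' hb h
      exact ⟨γ₂', Or.inr h₂, hb'⟩
  | seq l₁ l₂ ih₁ ih₂ =>
    intro γ₁ γ₂ γ₁' hb h
    obtain ⟨γm, h1, h2⟩ := h
    obtain ⟨γm', hm, hbm⟩ := ih₁ γ₁ γ₂ γm hb h1
    obtain ⟨γ₂', h₂, hb'⟩ := ih₂ γm γm' γ₁' hbm h2
    exact ⟨γ₂', ⟨γm', hm, h₂⟩, hb'⟩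
  | star l ih =>
    intro γ₁ γ₂ γ₁' hb h
    induction h with
    | refl => exact ⟨γ₂, Relation.ReflTransGen.refl, hb⟩
    | tail _ hstep ih2 =>
      obtain ⟨γm', hm, hbm⟩ := ih2
      obtain ⟨γ₂', h₂, hb'⟩ := ih _ _ _ hbm hstep
      exact ⟨γ₂', hm.tail h₂, hb'⟩

def IsBisim.symm {E A Data C₁ C₂ SP TP : Type}
    {spSat : SP → (A → Data) → Prop}
    {tpSat : TP → (A → Data) → (A → Data) → Prop}
    {M₁ : PreEDTS E A Data C₁} {M₂ : PreEDTS E A Data C₂}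
    {B : Conf' C₁ A Data → Conf' C₂ A Data → Prop}
    (hB : IsBisim spSat tpSat M₁ M₂ B) :
    IsBisim spSat tpSat M₂ M₁ (fun γ₂ γ₁ => B γ₁ γ₂) where
  dom := fun γ₂ γ₁ h => (hB.dom γ₁ γ₂ h).symm
  atom := fun γ₂ γ₁ h φ => (hB.atom γ₁ γ₂ h φ).symm
  zig := fun γ₂ γ₁ h e ψ γ₂' hr ht => hB.zag γ₁ γ₂ h e ψ γ₂' hr ht
  zag := fun γ₂ γ₁ h e ψ γ₁' hr ht => hB.zig γ₁ γ₂ h e ψ γ₁' hr ht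

/-- If `B` is a bisimulation relation between Σ-edts `M₁` and `M₂`,
then `B`-related configurations satisfy the same hybrid-free sentences. -/
theorem bisim_invariance
    {E A Data C₁ C₂ SP TP : Type} [Finite E]
    (spSat : SP → (A → Data) → Prop)
    (tpSat : TP → (A → Data) → (A → Data) → Prop)
    (M₁ : PreEDTS E A Data C₁) (M₂ : PreEDTS E A Data C₂)
    (hM₁ : M₁.IsEDTS) (hM₂ : M₂.IsEDTS)
    (B : Conf' C₁ A Data → Conf' C₂ A Data → Prop)
    (hB : IsBisim spSat tpSat M₁ M₂ B) :
    ∀ (ρ : HFrm E TP SP) γ₁ γ₂, B γ₁ γ₂ →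
      (hsat spSat tpSat M₁ γ₁ ρ ↔ hsat spSat tpSat M₂ γ₂ ρ) := by
  intro ρ
  induction ρ with
  | st φ => intro γ₁ γ₂ hb; exact hB.atom γ₁ γ₂ hb φ
  | dia l ρ ih =>
    intro γ₁ γ₂ hb
    constructor
    · rintro ⟨γ₁', h, hs⟩
      obtain ⟨γ₂', h₂, hb'⟩ := act_zig spSat tpSat M₁ M₂ B hB l γ₁ γ₂ γ₁' hb h
      exact ⟨γ₂', h₂, (ih γ₁' γ₂' hb').1 hs⟩
    · rintro ⟨γ₂', h, hs⟩
      obtain ⟨γ₁', h₁, hb'⟩ := act_zig spSat tpSat M₂ M₁ _ hB.symm l γ₂ γ₁ γ₂' hb h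
      exact ⟨γ₁', h₁, (ih γ₁' γ₂' hb').2 hs⟩
  | tt => intro _ _ _; exact Iff.rfl
  | neg ρ ih => intro γ₁ γ₂ hb; exact not_congr (ih γ₁ γ₂ hb)
  | or ρ₁ ρ₂ ih₁ ih₂ => intro γ₁ γ₂ hb; exact or_congr (ih₁ γ₁ γ₂ hb) (ih₂ γ₁ γ₂ hb)
end

section
/- Let Σ be an ed signature, M1 and M2 image-finite Σ-edts, and γ1 ∈ Conf(M1), γ2 ∈ Conf(M2) configurations such that for all hybrid-free sentences ρ: M1, γ1 ⊨ ρ if and only if M2, γ2 ⊨ ρ. Then there exists a bisimulation relation B between M1 and M2 with (γ1, γ2) ∈ B. -/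
instance {E TP SP : Type} : Inhabited (HFrm E TP SP) := ⟨HFrm.tt⟩

/-- Finite conjunction of hybrid-free formulae. -/
def conjAll {E TP SP : Type} : List (HFrm E TP SP) → HFrm E TP SP
  | [] => HFrm.tt
  | ρ :: l => HFrm.neg (HFrm.or (HFrm.neg ρ) (HFrm.neg (conjAll l)))

lemma hsat_conjAll {E A Data C SP TP : Type} (spSat : SP → (A → Data) → Prop)
    (tpSat : TP → (A → Data) → (A → Data) → Prop)
    (M : PreEDTS E A Data C) (γ : Conf' C A Data) (L : List (HFrm E TP SP)) :
    hsat spSat tpSat M γ (conjAll L) ↔ ∀ ρ ∈ L, hsat spSat tpSat M γ ρ := by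
  induction L with
  | nil => simp [conjAll, hsat]
  | cons ρ l ih =>
    simp only [conjAll, hsat, ih, List.mem_cons]
    constructor
    · intro h σ hσ
      rcases hσ with rfl | hσ
      · tauto
      · exact (not_not.mp (not_or.mp h).2) σ hσ
    · intro h
      push_neg
      exact ⟨h ρ (Or.inl rfl), fun σ hσ => h σ (Or.inr hσ)⟩

lemma hm_zig {E A Data C₁ C₂ SP TP : Type}
    (spSat : SP → (A → Data) → Prop)
    (tpSat : TP → (A → Data) → (A → Data) → Prop)
    (M₁ : PreEDTS E A Data C₁) (M₂ : PreEDTS E A Data C₂)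
    (γ₁ : Conf' C₁ A Data) (γ₂ : Conf' C₂ A Data)
    (hFin : ∀ e : E, {γ' | (γ₂, γ') ∈ M₂.rel e}.Finite)
    (heq : ∀ ρ : HFrm E TP SP,
      hsat spSat tpSat M₁ γ₁ ρ ↔ hsat spSat tpSat M₂ γ₂ ρ)
    (e : E) (ψ : TP) (γ₁' : Conf' C₁ A Data)
    (hstep : (γ₁, γ₁') ∈ M₁.rel e) (hψ : tpSat ψ γ₁.2 γ₁'.2) :
    ∃ γ₂', ((γ₂, γ₂') ∈ M₂.rel e ∧ tpSat ψ γ₂.2 γ₂'.2) ∧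
      ∀ ρ : HFrm E TP SP,
        hsat spSat tpSat M₁ γ₁' ρ ↔ hsat spSat tpSat M₂ γ₂' ρ := by
  classical
  by_contra hcon
  push_neg at hcon
  have key : ∀ γ' : Conf' C₂ A Data, (γ₂, γ') ∈ M₂.rel e → tpSat ψ γ₂.2 γ'.2 →
      ∃ ρ : HFrm E TP SP,
        hsat spSat tpSat M₁ γ₁' ρ ∧ ¬ hsat spSat tpSat M₂ γ' ρ := by
    intro γ' h1 h2
    by_contra hno
    push_neg at hno
    have hiff : ∀ ρ : HFrm E TP SP,
        hsat spSat tpSat M₁ γ₁' ρ ↔ hsat spSat tpSat M₂ γ' ρ := by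
      intro ρ
      refine ⟨fun h => hno ρ h, fun h => ?_⟩
      by_contra hnot
      have h1' : hsat spSat tpSat M₁ γ₁' (HFrm.neg ρ) := hnot
      exact (hno (HFrm.neg ρ) h1') h
    obtain ⟨ρ, hρ⟩ := hcon γ' ⟨h1, h2⟩
    rcases hρ with ⟨ha, hb⟩ | ⟨ha, hb⟩
    · exact hb ((hiff ρ).1 ha)
    · exact ha ((hiff ρ).2 hb)
  choose! d hd1 hd2 using key
  -- the finite set of (e,ψ)-successors of γ₂
  let T : Finset (Conf' C₂ A Data) :=
    (hFin e).toFinset.filter (fun γ' => tpSat ψ γ₂.2 γ'.2)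
  have hT : ∀ γ', γ' ∈ T ↔ ((γ₂, γ') ∈ M₂.rel e ∧ tpSat ψ γ₂.2 γ'.2) := by
    intro γ'
    simp [T, Set.Finite.mem_toFinset]
  let ρ₀ : HFrm E TP SP := conjAll (T.toList.map d)
  have h1 : hsat spSat tpSat M₁ γ₁ (HFrm.dia (Act.atom e ψ) ρ₀) := by
    refine ⟨γ₁', ⟨hstep, hψ⟩, ?_⟩
    rw [hsat_conjAll]
    intro σ hσ
    obtain ⟨γ', hγ', rfl⟩ := List.mem_map.1 hσ
    have hm := (hT γ').1 (Finset.mem_toList.1 hγ')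
    exact hd1 γ' hm.1 hm.2
  have h2 := (heq _).1 h1
  obtain ⟨γ₂', ⟨hmem, htp⟩, hρ⟩ := h2
  have hmemT : γ₂' ∈ T := (hT γ₂').2 ⟨hmem, htp⟩
  have : hsat spSat tpSat M₂ γ₂' (d γ₂') := by
    rw [hsat_conjAll] at hρ
    exact hρ _ (List.mem_map.2 ⟨γ₂', Finset.mem_toList.2 hmemT, rfl⟩)
  exact hd2 γ₂' hmem htp this

/-- **Hennessy–Milner.** If `M₁`, `M₂` are image-finite Σ-edts and the
configurations `γ₁ ∈ Conf(M₁)`, `γ₂ ∈ Conf(M₂)` satisfy the same hybrid-free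
sentences, then there is a bisimulation relation `B` between `M₁` and `M₂` with
`(γ₁, γ₂) ∈ B`. -/
theorem hennessy_milner
    {E A Data C₁ C₂ SP TP : Type} [Finite E]
    (spSat : SP → (A → Data) → Prop)
    (tpSat : TP → (A → Data) → (A → Data) → Prop)
    (M₁ : PreEDTS E A Data C₁) (M₂ : PreEDTS E A Data C₂)
    (hM₁ : M₁.IsEDTS) (hM₂ : M₂.IsEDTS)
    (hIF₁ : ∀ γ ∈ M₁.conf, ∀ e : E, {γ' | (γ, γ') ∈ M₁.rel e}.Finite)
    (hIF₂ : ∀ γ ∈ M₂.conf, ∀ e : E, {γ' | (γ, γ') ∈ M₂.rel e}.Finite)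
    (γ₁ : Conf' C₁ A Data) (γ₂ : Conf' C₂ A Data)
    (hγ₁ : γ₁ ∈ M₁.conf) (hγ₂ : γ₂ ∈ M₂.conf)
    (heq : ∀ ρ : HFrm E TP SP,
      hsat spSat tpSat M₁ γ₁ ρ ↔ hsat spSat tpSat M₂ γ₂ ρ) :
    ∃ B, IsBisim spSat tpSat M₁ M₂ B ∧ B γ₁ γ₂ := by
  refine ⟨fun δ₁ δ₂ => δ₁ ∈ M₁.conf ∧ δ₂ ∈ M₂.conf ∧
      (∀ ρ : HFrm E TP SP, hsat spSat tpSat M₁ δ₁ ρ ↔ hsat spSat tpSat M₂ δ₂ ρ),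
    ⟨?_, ?_, ?_, ?_⟩, hγ₁, hγ₂, heq⟩
  · exact fun δ₁ δ₂ h => ⟨h.1, h.2.1⟩
  · intro δ₁ δ₂ h φ
    exact h.2.2 (HFrm.st φ)
  · intro δ₁ δ₂ h e ψ δ₁' hstep hψ
    obtain ⟨δ₂', hs, hiff⟩ :=
      hm_zig spSat tpSat M₁ M₂ δ₁ δ₂ (hIF₂ δ₂ h.2.1) h.2.2 e ψ δ₁' hstep hψ
    exact ⟨δ₂', hs, (hM₁.1 e _ hstep).2, (hM₂.1 e _ hs.1).2, hiff⟩
  · intro δ₁ δ₂ h e ψ δ₂' hstep hψ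
    obtain ⟨δ₁', hs, hiff⟩ :=
      hm_zig spSat tpSat M₂ M₁ δ₂ δ₁ (hIF₁ δ₁ h.1) (fun ρ => (h.2.2 ρ).symm)
        e ψ δ₂' hstep hψ
    exact ⟨δ₁', hs, (hM₁.1 e _ hs.1).2, (hM₂.1 e _ hstep).2,
      fun ρ => (hiff ρ).symm⟩
end

section
/- There exist an ed signature Σ, two bisimilar Σ-edts M1 and M2, and an ed sentence ρ containing the hybrid binder such that M1 ⊨ ρ but M2 ⊭ ρ. Concretely, for Σ = ({e}, {a}) and ρ = ↓x.⟨e⧸a′=a⟩x: the edts M1 with a single control state c0 and loop R_e = {(γ0, γ0)} satisfies ρ, while the bisimilar edts M2 with two control states c0, c, relation R′_e = {(γ0, γ), (γ, γ0)} where ctrl(γ0) = c0, ctrl(γ) = c and ω(γ0) = ω(γ), does not satisfy ρ. -/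
/-- Full Σ-ed formulae of EDHL with control-state variables `X`, the binder `↓x.ρ`
and the jump operator `@x.ρ`. -/
inductive EFrm (E TP SP X : Type) : Type where
  | st : SP → EFrm E TP SP X
  | var : X → EFrm E TP SP X
  | bind : X → EFrm E TP SP X → EFrm E TP SP X
  | at_ : X → EFrm E TP SP X → EFrm E TP SP X
  | dia : Act E TP → EFrm E TP SP X → EFrm E TP SP X
  | tt : EFrm E TP SP X
  | neg : EFrm E TP SP X → EFrm E TP SP X
  | or : EFrm E TP SP X → EFrm E TP SP X → EFrm E TP SP X

/-- Satisfaction of EDHL formulae w.r.t. a valuation `v : X → C` and a configuration. -/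
def esat {E A Data C SP TP X : Type} [DecidableEq X]
    (spSat : SP → (A → Data) → Prop)
    (tpSat : TP → (A → Data) → (A → Data) → Prop)
    (M : PreEDTS E A Data C) : (X → C) → Conf' C A Data → EFrm E TP SP X → Prop
  | _, γ, EFrm.st φ => spSat φ γ.2
  | v, γ, EFrm.var x => γ.1 = v x
  | v, γ, EFrm.bind x ρ => esat spSat tpSat M (Function.update v x γ.1) γ ρ
  | v, _, EFrm.at_ x ρ => ∀ γ' ∈ M.conf, γ'.1 = v x → esat spSat tpSat M v γ' ρ
  | v, γ, EFrm.dia l ρ => ∃ γ', actRel tpSat M l γ γ' ∧ esat spSat tpSat M v γ' ρ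
  | _, _, EFrm.tt => True
  | v, γ, EFrm.neg ρ => ¬ esat spSat tpSat M v γ ρ
  | v, γ, EFrm.or ρ₁ ρ₂ => esat spSat tpSat M v γ ρ₁ ∨ esat spSat tpSat M v γ ρ₂

/-- A sentence is satisfied by `M` if it holds at all initial configurations
(under every valuation). -/
def MsatE {E A Data C SP TP X : Type} [DecidableEq X]
    (spSat : SP → (A → Data) → Prop)
    (tpSat : TP → (A → Data) → (A → Data) → Prop)
    (M : PreEDTS E A Data C) (ρ : EFrm E TP SP X) : Prop :=
  ∀ (v : X → C), ∀ γ0 ∈ M.init, esat spSat tpSat M v γ0 ρ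

/-! ### The concrete counterexample
Signature Σ = ({e}, {a}) is modelled by `E := Unit`, `A := Unit`; the state
(resp. transition) predicates are all predicates on (pairs of) data states. -/

/-- All state predicates. -/
abbrev SP0 : Type := (Unit → Unit) → Prop

/-- All transition predicates. -/
abbrev TP0 : Type := (Unit → Unit) → (Unit → Unit) → Prop

def spSat0 : SP0 → (Unit → Unit) → Prop := fun φ ω => φ ω

def tpSat0 : TP0 → (Unit → Unit) → (Unit → Unit) → Prop := fun ψ ω ω' => ψ ω ω'

/-- `M₁`: a single control state `c₀` with the loop `R_e = {(γ₀, γ₀)}`. -/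
def M1ex : PreEDTS Unit Unit Unit Unit where
  conf := Set.univ
  rel := fun _ => Set.univ
  c0 := ()
  init := Set.univ

/-- `M₂`: two control states `c₀ = false` and `c = true`, with
`R'_e = {(γ₀, γ), (γ, γ₀)}` and the same data state everywhere. -/
def M2ex : PreEDTS Unit Unit Unit Bool where
  conf := Set.univ
  rel := fun _ => {p | p.1.1 ≠ p.2.1}
  c0 := false
  init := {γ | γ.1 = false}

/-- The sentence `ρ = ↓x.⟨e⧸a′=a⟩x` (it contains the hybrid binder). -/
def ρex : EFrm Unit TP0 SP0 Unit :=
  EFrm.bind () (EFrm.dia (Act.atom () (fun ω ω' => ω' () = ω ())) (EFrm.var ()))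

/-!
The binder `↓x` stores the current control state, so `↓x.⟨e⧸a′=a⟩x` says that some `e`-step
returns to the control state it started from. Bisimulations only observe events and data states.
Both systems have a single data state and an `e`-step out of every configuration, so relating all
configurations is a bisimulation; yet the loop of `M₁` returns to its control state, while every
step of `M₂` switches between `c₀` and `c`.
-/

namespace PreEDTS

variable {E A Data C : Type}

def IsSerial (M : PreEDTS E A Data C) : Prop :=
  ∀ γ ∈ M.conf, ∀ e, ∃ γ', (γ, γ') ∈ M.rel e

end PreEDTS

section

variable {E A Data C C₁ C₂ SP TP X : Type}

theorem bisimilar_of_subsingleton_of_isSerial [Subsingleton (A → Data)]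
    (spSat : SP → (A → Data) → Prop) (tpSat : TP → (A → Data) → (A → Data) → Prop)
    {M₁ : PreEDTS E A Data C₁} {M₂ : PreEDTS E A Data C₂}
    (h₁ : M₁.IsEDTS) (h₂ : M₂.IsEDTS) (hs₁ : M₁.IsSerial) (hs₂ : M₂.IsSerial) :
    Bisimilar spSat tpSat M₁ M₂ := by
  obtain ⟨hrel₁, hinit₁, -, ⟨γ₁, hγ₁⟩, -⟩ := h₁
  obtain ⟨hrel₂, hinit₂, -, ⟨γ₂, hγ₂⟩, -⟩ := h₂
  refine ⟨fun γ₁ γ₂ => γ₁ ∈ M₁.conf ∧ γ₂ ∈ M₂.conf, ⟨fun _ _ h => h, ?_, ?_, ?_⟩,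
    fun _ h => ⟨γ₂, hγ₂, hinit₁ h, hinit₂ hγ₂⟩, fun _ h => ⟨γ₁, hγ₁, hinit₁ hγ₁, hinit₂ h⟩⟩
  · intro γ₁ γ₂ _ φ
    rw [Subsingleton.elim γ₁.2 γ₂.2]
  · rintro γ₁ γ₂ ⟨-, hc₂⟩ e ψ γ₁' hstep hψ
    obtain ⟨γ₂', hstep₂⟩ := hs₂ γ₂ hc₂ e
    refine ⟨γ₂', ⟨hstep₂, ?_⟩, (hrel₁ e _ hstep).2, (hrel₂ e _ hstep₂).2⟩
    rwa [Subsingleton.elim γ₂.2 γ₁.2, Subsingleton.elim γ₂'.2 γ₁'.2]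
  · rintro γ₁ γ₂ ⟨hc₁, -⟩ e ψ γ₂' hstep hψ
    obtain ⟨γ₁', hstep₁⟩ := hs₁ γ₁ hc₁ e
    refine ⟨γ₁', ⟨hstep₁, ?_⟩, (hrel₁ e _ hstep₁).2, (hrel₂ e _ hstep).2⟩
    rwa [Subsingleton.elim γ₁.2 γ₂.2, Subsingleton.elim γ₁'.2 γ₂'.2]

theorem esat_bind_dia_var_iff [DecidableEq X] (spSat : SP → (A → Data) → Prop)
    (tpSat : TP → (A → Data) → (A → Data) → Prop) (M : PreEDTS E A Data C)
    (x : X) (l : Act E TP) (v : X → C) (γ : Conf' C A Data) :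
    esat spSat tpSat M v γ (EFrm.bind x (EFrm.dia l (EFrm.var x))) ↔
      ∃ γ', actRel tpSat M l γ γ' ∧ γ'.1 = γ.1 := by
  simp only [esat, Function.update_self]

end

theorem esat_ρex_iff {C : Type} (M : PreEDTS Unit Unit Unit C) (v : Unit → C)
    (γ : Conf' C Unit Unit) :
    esat spSat0 tpSat0 M v γ ρex ↔ ∃ γ', (γ, γ') ∈ M.rel () ∧ γ'.1 = γ.1 := by
  simp only [ρex, esat_bind_dia_var_iff, actRel, tpSat0, Subsingleton.elim (_ : Unit) (),
    and_true]

theorem M1ex_isEDTS : M1ex.IsEDTS :=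
  ⟨fun _ _ _ => ⟨trivial, trivial⟩, fun _ _ => trivial, fun _ _ => rfl,
    ⟨((), fun _ => ()), trivial⟩, fun γ _ => ⟨γ, trivial, .refl⟩⟩

theorem M2ex_isEDTS : M2ex.IsEDTS := by
  refine ⟨fun _ _ _ => ⟨trivial, trivial⟩, fun _ _ => trivial, fun _ h => h,
    ⟨(false, fun _ => ()), rfl⟩, fun γ _ => ?_⟩
  cases hγ : γ.1
  · exact ⟨γ, hγ, .refl⟩
  · exact ⟨(false, γ.2), rfl, .single ⟨(), by simp [M2ex, hγ]⟩⟩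

theorem M1ex_isSerial : M1ex.IsSerial :=
  fun γ _ _ => ⟨γ, trivial⟩

theorem M2ex_isSerial : M2ex.IsSerial :=
  fun γ _ _ => ⟨(!γ.1, γ.2), by simp [M2ex]⟩

/-- `M1ex` and `M2ex` are bisimilar Σ-edts, and the ed sentence
`ρex = ↓x.⟨e⧸a′=a⟩x` (which contains the hybrid binder) is satisfied by `M1ex`
but not by `M2ex`. -/
theorem hybrid_sentence_not_bisimulation_invariant :
    M1ex.IsEDTS ∧ M2ex.IsEDTS ∧
    Bisimilar spSat0 tpSat0 M1ex M2ex ∧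
    MsatE spSat0 tpSat0 M1ex ρex ∧
    ¬ MsatE spSat0 tpSat0 M2ex ρex := by
  refine ⟨M1ex_isEDTS, M2ex_isEDTS,
    bisimilar_of_subsingleton_of_isSerial _ _ M1ex_isEDTS M2ex_isEDTS M1ex_isSerial M2ex_isSerial,
    fun v γ _ => (esat_ρex_iff M1ex v γ).2 ⟨γ, trivial, rfl⟩, fun h => ?_⟩
  obtain ⟨γ', hstep, hctrl⟩ :=
    (esat_ρex_iff M2ex (fun _ => false) (false, fun _ => ())).1 (h _ _ rfl)
  exact hstep hctrl.symm
end
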